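/- arXiv:0909.3582 — 3 statements merged into one kernel-verified Lean document; each statement's English description precedes it below -/
import Mathlib

section
/- Let k, l ∈ ℤ³ satisfy k₀+k₁+k₂ = l₀+l₁+l₂ and the freeness condition, and suppose the leftmost column of A has nonzero pairwise coprime entries, i.e. A₀₀, A₁₀, A₂₀ are nonzero and pairwise coprime. Then A₀₀ is nonzero and coprime to each of A₁₀, A₂₀, A₁₁, A₂₁; A₁₀ is nonzero and coprime to each of A₀₀, A₂₀, A₀₁, A₂₁; and A₂₀ is nonzero and coprime to each of A₀₀, A₁₀, A₀₁, A₁₁. -/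
/-!
Because `k` and `l` have the same sum, each triple `(k₀ - l_{σ 0}, k₁ - l_{σ 1}, k₂ - l_{σ 2})`
of the freeness condition sums to zero, so the gcd of any two of its entries divides the third.
A primitive zero-sum triple is therefore pairwise coprime. Two entries `A i a`, `A j b` with
`i ≠ j` and `a ≠ b` always lie in a common such triple, hence are coprime.
-/

/-- The matrix `A` of an Eschenburg space: `A k l i j = k i - l j`. -/
def A (k l : Fin 3 → ℤ) (i j : Fin 3) : ℤ := k i - l j

open Equiv Finset

theorem Equiv.Perm.exists_apply_eq_and_apply_eq {α : Type*} [DecidableEq α] {i j a b : α}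
    (hij : i ≠ j) (hab : a ≠ b) : ∃ σ : Perm α, σ i = a ∧ σ j = b := by
  have hja : swap i a j ≠ a := by
    simpa using (swap i a).injective.ne hij.symm
  refine ⟨swap (swap i a j) b * swap i a, ?_, ?_⟩
  · simp [swap_apply_of_ne_of_ne hja.symm hab]
  · simp

theorem dvd_of_sum_eq_zero {ι R : Type*} [Fintype ι] [DecidableEq ι] [CommRing R]
    {v : ι → R} {d : R} (hv : ∑ m, v m = 0) (n : ι) (hd : ∀ m ≠ n, d ∣ v m) : d ∣ v n := by
  have hvn : v n = -∑ m ∈ univ.erase n, v m := by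
    rw [eq_neg_iff_add_eq_zero, add_sum_erase _ _ (mem_univ n), hv]
  rw [hvn]
  exact (dvd_sum fun m hm ↦ hd m (ne_of_mem_erase hm)).neg_right

theorem Int.gcd_eq_one_of_sum_eq_zero {v : Fin 3 → ℤ} (hv : ∑ m, v m = 0)
    (hprim : Int.gcd (v 0) (Int.gcd (v 1) (v 2)) = 1) {i j : Fin 3} (hij : i ≠ j) :
    Int.gcd (v i) (v j) = 1 := by
  set d := Int.gcd (v i) (v j)
  have hdvd : ∀ n, (d : ℤ) ∣ v n := by
    intro n
    by_cases hni : n = i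
    · exact hni ▸ Int.gcd_dvd_left _ _
    by_cases hnj : n = j
    · exact hnj ▸ Int.gcd_dvd_right _ _
    refine dvd_of_sum_eq_zero hv n fun m hmn ↦ ?_
    obtain rfl | rfl : m = i ∨ m = j := by omega
    exacts [Int.gcd_dvd_left _ _, Int.gcd_dvd_right _ _]
  have hd1 : (d : ℤ) ∣ ((1 : ℕ) : ℤ) :=
    hprim ▸ Int.dvd_coe_gcd (hdvd 0) (Int.dvd_coe_gcd (hdvd 1) (hdvd 2))
  exact Nat.dvd_one.mp (Int.natCast_dvd_natCast.mp hd1)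

theorem gcd_A_eq_one {k l : Fin 3 → ℤ} (hsum : k 0 + k 1 + k 2 = l 0 + l 1 + l 2)
    (hfree : ∀ σ : Equiv.Perm (Fin 3),
      Int.gcd (k 0 - l (σ 0)) (Int.gcd (k 1 - l (σ 1)) (k 2 - l (σ 2))) = 1)
    {i j a b : Fin 3} (hij : i ≠ j) (hab : a ≠ b) : Int.gcd (A k l i a) (A k l j b) = 1 := by
  obtain ⟨σ, rfl, rfl⟩ := Perm.exists_apply_eq_and_apply_eq hij hab
  have hv : ∑ m, A k l m (σ m) = 0 := by
    simp only [A, sum_sub_distrib, Equiv.sum_comp σ l, Fin.sum_univ_three]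
    linarith
  exact Int.gcd_eq_one_of_sum_eq_zero hv (hfree σ) hij

/-- If `k, l ∈ ℤ³` have equal sums, satisfy the freeness condition, and the
leftmost column of `A` has nonzero pairwise coprime entries, then `A₀₀` is
nonzero and coprime to each of `A₁₀, A₂₀, A₁₁, A₂₁`; `A₁₀` is nonzero and
coprime to each of `A₀₀, A₂₀, A₀₁, A₂₁`; and `A₂₀` is nonzero and coprime to
each of `A₀₀, A₁₀, A₀₁, A₁₁`. -/
theorem stmt3 (k l : Fin 3 → ℤ)
    (hsum : k 0 + k 1 + k 2 = l 0 + l 1 + l 2)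
    (hfree : ∀ σ : Equiv.Perm (Fin 3),
      Int.gcd (k 0 - l (σ 0)) (Int.gcd (k 1 - l (σ 1)) (k 2 - l (σ 2))) = 1)
    (h00 : A k l 0 0 ≠ 0) (h10 : A k l 1 0 ≠ 0) (h20 : A k l 2 0 ≠ 0)
    (hc1 : Int.gcd (A k l 0 0) (A k l 1 0) = 1)
    (hc2 : Int.gcd (A k l 0 0) (A k l 2 0) = 1)
    (hc3 : Int.gcd (A k l 1 0) (A k l 2 0) = 1) :
    (A k l 0 0 ≠ 0 ∧ Int.gcd (A k l 0 0) (A k l 1 0) = 1 ∧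
      Int.gcd (A k l 0 0) (A k l 2 0) = 1 ∧ Int.gcd (A k l 0 0) (A k l 1 1) = 1 ∧
      Int.gcd (A k l 0 0) (A k l 2 1) = 1) ∧
    (A k l 1 0 ≠ 0 ∧ Int.gcd (A k l 1 0) (A k l 0 0) = 1 ∧
      Int.gcd (A k l 1 0) (A k l 2 0) = 1 ∧ Int.gcd (A k l 1 0) (A k l 0 1) = 1 ∧
      Int.gcd (A k l 1 0) (A k l 2 1) = 1) ∧
    (A k l 2 0 ≠ 0 ∧ Int.gcd (A k l 2 0) (A k l 0 0) = 1 ∧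
      Int.gcd (A k l 2 0) (A k l 1 0) = 1 ∧ Int.gcd (A k l 2 0) (A k l 0 1) = 1 ∧
      Int.gcd (A k l 2 0) (A k l 1 1) = 1) := by
  have hA {i j a b : Fin 3} (hij : i ≠ j) (hab : a ≠ b) :
      Int.gcd (A k l i a) (A k l j b) = 1 :=
    gcd_A_eq_one hsum hfree hij hab
  exact ⟨⟨h00, hc1, hc2, hA (by decide) (by decide), hA (by decide) (by decide)⟩,
    ⟨h10, Int.gcd_comm .. ▸ hc1, hc3, hA (by decide) (by decide), hA (by decide) (by decide)⟩,
    ⟨h20, Int.gcd_comm .. ▸ hc2, Int.gcd_comm .. ▸ hc3, hA (by decide) (by decide),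
      hA (by decide) (by decide)⟩⟩
end

section
/- Let k, l ∈ ℤ³ satisfy k₀+k₁+k₂ = l₀+l₁+l₂ and the freeness condition. Then r = σ₂(k) − σ₂(l) is odd. -/
/-! Reduce modulo 2. If `r` were even, `k` and `l` would have the same first two elementary
symmetric functions over `𝔽₂`. These determine the number `n ∈ {0,…,3}` of odd entries of a triple
(`e₁ ≡ n` and `e₂ ≡ n(n-1)/2`, so `n mod 4` is known), hence some permutation `σ` matches the
parities of `k` and `l` entrywise, and `2` divides every entry of `k - l ∘ σ`, against freeness. -/

theorem ZMod.two_exists_perm_of_esymm_eq (a b : Fin 3 → ZMod 2)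
    (h₁ : a 0 + a 1 + a 2 = b 0 + b 1 + b 2)
    (h₂ : a 0 * a 1 + a 0 * a 2 + a 1 * a 2 = b 0 * b 1 + b 0 * b 2 + b 1 * b 2) :
    ∃ σ : Equiv.Perm (Fin 3), ∀ i, a i = b (σ i) := by
  revert a b
  decide

theorem exists_perm_forall_two_dvd_sub_of_even (k l : Fin 3 → ℤ)
    (hsum : k 0 + k 1 + k 2 = l 0 + l 1 + l 2)
    (heven : Even ((k 0 * k 1 + k 0 * k 2 + k 1 * k 2) - (l 0 * l 1 + l 0 * l 2 + l 1 * l 2))) :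
    ∃ σ : Equiv.Perm (Fin 3), ∀ i, (2 : ℤ) ∣ k i - l (σ i) := by
  have h₂ : ((k 0 * k 1 + k 0 * k 2 + k 1 * k 2 : ℤ) : ZMod 2) =
      ((l 0 * l 1 + l 0 * l 2 + l 1 * l 2 : ℤ) : ZMod 2) :=
    (ZMod.intCast_eq_intCast_iff_dvd_sub _ _ 2).mpr (by simpa using heven.two_dvd.neg_right)
  push_cast at h₂
  obtain ⟨σ, hσ⟩ := ZMod.two_exists_perm_of_esymm_eq (fun i => (k i : ZMod 2))
    (fun i => (l i : ZMod 2)) (by exact_mod_cast congrArg (Int.cast : ℤ → ZMod 2) hsum) h₂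
  refine ⟨σ, fun i => ?_⟩
  simpa using (ZMod.intCast_eq_intCast_iff_dvd_sub _ _ 2).mp (hσ i).symm

/-- If `k, l ∈ ℤ³` have equal sums and satisfy the freeness condition, then
`r = σ₂(k) - σ₂(l)` is odd. -/
theorem stmt4 (k l : Fin 3 → ℤ)
    (hsum : k 0 + k 1 + k 2 = l 0 + l 1 + l 2)
    (hfree : ∀ σ : Equiv.Perm (Fin 3),
      Int.gcd (k 0 - l (σ 0)) (Int.gcd (k 1 - l (σ 1)) (k 2 - l (σ 2))) = 1) :
    Odd ((k 0 * k 1 + k 0 * k 2 + k 1 * k 2) -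
      (l 0 * l 1 + l 0 * l 2 + l 1 * l 2)) := by
  by_contra hodd
  obtain ⟨σ, hσ⟩ :=
    exists_perm_forall_two_dvd_sub_of_even k l hsum (Int.not_odd_iff_even.mp hodd)
  have h2 : (2 : ℤ) ∣ Int.gcd (k 0 - l (σ 0)) (Int.gcd (k 1 - l (σ 1)) (k 2 - l (σ 2))) :=
    Int.dvd_coe_gcd (hσ 0) (Int.dvd_coe_gcd (hσ 1) (hσ 2))
  rw [hfree σ] at h2
  norm_num at h2
end

section
/- Let k, l ∈ ℤ³ satisfy k₀+k₁+k₂ = l₀+l₁+l₂ and the freeness condition, and suppose A₀₀·A₁₀·A₂₀ ≠ 0, where A_{ij} = k_i − l_j. Then w = (σ₂(k) − σ₂(l))·A₀₀·A₁₀·A₂₀ ≠ 0. -/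
/-!
If `w = 0` then, as `A₀₀ A₁₀ A₂₀ ≠ 0`, the triples `k` and `l` have the same first and second
elementary symmetric functions. Modulo 2 these determine a triple up to order (they record the
number of odd entries mod 4), so some permutation `σ` makes every `k_i - l_{σ(i)}` even,
contradicting freeness.
-/

theorem ZMod.two_exists_perm_of_sum_eq_of_sigma2_eq (a b : Fin 3 → ZMod 2)
    (hsum : a 0 + a 1 + a 2 = b 0 + b 1 + b 2)
    (hsigma2 : a 0 * a 1 + a 0 * a 2 + a 1 * a 2 = b 0 * b 1 + b 0 * b 2 + b 1 * b 2) :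
    ∃ σ : Equiv.Perm (Fin 3), ∀ i, a i = b (σ i) := by
  revert a b
  decide

theorem Int.exists_perm_two_dvd_sub_of_sum_eq_of_sigma2_eq (k l : Fin 3 → ℤ)
    (hsum : k 0 + k 1 + k 2 = l 0 + l 1 + l 2)
    (hsigma2 : k 0 * k 1 + k 0 * k 2 + k 1 * k 2 = l 0 * l 1 + l 0 * l 2 + l 1 * l 2) :
    ∃ σ : Equiv.Perm (Fin 3), ∀ i, (2 : ℤ) ∣ k i - l (σ i) := by
  obtain ⟨σ, hσ⟩ := ZMod.two_exists_perm_of_sum_eq_of_sigma2_eq (fun i => (k i : ZMod 2))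
    (fun i => (l i : ZMod 2)) (by exact_mod_cast congrArg (Int.cast : ℤ → ZMod 2) hsum)
    (by exact_mod_cast congrArg (Int.cast : ℤ → ZMod 2) hsigma2)
  refine ⟨σ, fun i => ?_⟩
  rw [← dvd_neg, neg_sub]
  exact_mod_cast (ZMod.intCast_eq_intCast_iff_dvd_sub (k i) (l (σ i)) 2).mp (hσ i)

theorem Int.not_two_dvd_all_of_gcd_eq_one {a b c : ℤ} (h : Int.gcd a (Int.gcd b c) = 1) :
    ¬ ((2 : ℤ) ∣ a ∧ (2 : ℤ) ∣ b ∧ (2 : ℤ) ∣ c) := by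
  rintro ⟨ha, hb, hc⟩
  have := Int.dvd_coe_gcd ha (Int.dvd_coe_gcd hb hc)
  rw [h] at this
  norm_num at this

/-- If `k, l ∈ ℤ³` have equal sums, satisfy the freeness condition, and
`A₀₀ A₁₀ A₂₀ ≠ 0` where `A_{ij} = k_i - l_j`, then
`w = (σ₂(k) - σ₂(l)) ⬝ A₀₀ A₁₀ A₂₀ ≠ 0`. -/
theorem stmt5 (k l : Fin 3 → ℤ)
    (hsum : k 0 + k 1 + k 2 = l 0 + l 1 + l 2)
    (hfree : ∀ σ : Equiv.Perm (Fin 3),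
      Int.gcd (k 0 - l (σ 0)) (Int.gcd (k 1 - l (σ 1)) (k 2 - l (σ 2))) = 1)
    (hA : (k 0 - l 0) * (k 1 - l 0) * (k 2 - l 0) ≠ 0) :
    ((k 0 * k 1 + k 0 * k 2 + k 1 * k 2) - (l 0 * l 1 + l 0 * l 2 + l 1 * l 2)) *
      ((k 0 - l 0) * (k 1 - l 0) * (k 2 - l 0)) ≠ 0 := by
  refine mul_ne_zero (fun hsigma2 => ?_) hA
  obtain ⟨σ, hσ⟩ := Int.exists_perm_two_dvd_sub_of_sum_eq_of_sigma2_eq k l hsum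
    (sub_eq_zero.mp hsigma2)
  exact Int.not_two_dvd_all_of_gcd_eq_one (hfree σ) ⟨hσ 0, hσ 1, hσ 2⟩
end
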